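/- If Σ_n a_n < ∞, then the sequence (S_n(x))_{n=0}^∞ converges for every x ∈ K. -/

import Mathlib

open MeasureTheory Filter Set Topology
open scoped ENNReal

noncomputable section

/-- Side length of generation-`n` squares: `s n = λ₁ ⋯ λₙ` (here `Λ k` is `λ_{k+1}`). -/
def sideLen (Λ : ℕ → ℝ) (n : ℕ) : ℝ := ∏ k ∈ Finset.range n, Λ k

/-- Lower-left corner of the generation-`n` square encoded by the word `w`. -/
def cornerPt (Λ : ℕ → ℝ) (w : ℕ → Bool × Bool) (n : ℕ) : ℂ :=
  ∑ k ∈ Finset.range n,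
    (((if (w k).1 then sideLen Λ k - sideLen Λ (k + 1) else 0 : ℝ) : ℂ) +
      ((if (w k).2 then sideLen Λ k - sideLen Λ (k + 1) else 0 : ℝ) : ℂ) * Complex.I)

/-- The (closed) generation-`n` square encoded by the word `w`. -/
def cSquare (Λ : ℕ → ℝ) (w : ℕ → Bool × Bool) (n : ℕ) : Set ℂ :=
  {z : ℂ | (cornerPt Λ w n).re ≤ z.re ∧ z.re ≤ (cornerPt Λ w n).re + sideLen Λ n ∧
    (cornerPt Λ w n).im ≤ z.im ∧ z.im ≤ (cornerPt Λ w n).im + sideLen Λ n}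

/-- The family `𝒟_n` of generation-`n` squares. -/
def genSq (Λ : ℕ → ℝ) (n : ℕ) : Set (Set ℂ) := {Q | ∃ w, Q = cSquare Λ w n}

/-- The planar Cantor set `K = ⋂ₙ ⋃ⱼ Qⱼⁿ`. -/
def cantorK (Λ : ℕ → ℝ) : Set ℂ := ⋂ n, ⋃ w : ℕ → Bool × Bool, cSquare Λ w n

/-- The linear density `a_n = 4^{-n}/s_n` at generation `n`. -/
def linDensity (Λ : ℕ → ℝ) (n : ℕ) : ℝ := 1 / (4 ^ n * sideLen Λ n)

open scoped Classical in
/-- `Q_n(x)`: the generation-`n` square containing `x` (the squares of a given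
generation are pairwise disjoint, so it is unique for `x ∈ K`). -/
def Qn (Λ : ℕ → ℝ) (n : ℕ) (x : ℂ) : Set ℂ :=
  if h : ∃ w, x ∈ cSquare Λ w n then cSquare Λ (Classical.choose h) n else ∅

/-- The truncated Cauchy integral at generation `n`:
`T_n(x) = ∫_{K ∖ Q_n(x)} (x-y)⁻¹ dμ(y)`. -/
def Tn (Λ : ℕ → ℝ) (μ : Measure ℂ) (n : ℕ) (x : ℂ) : ℂ :=
  ∫ y in cantorK Λ \ Qn Λ n x, (x - y)⁻¹ ∂μ

/-- The martingale `S_n(x) = μ(Q_n(x))⁻¹ ∫_{Q_n(x)} T_n dμ`. -/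
def Sn (Λ : ℕ → ℝ) (μ : Measure ℂ) (n : ℕ) (x : ℂ) : ℂ :=
  ⨍ z in Qn Λ n x, Tn Λ μ n z ∂μ

/-!
Distinct squares of one generation are `(1 - 2λ) sₙ`-apart, so on `Qₙ(x)` the function `Tₙ` is an
integral over the shells `(K ∩ Qⱼ) \ Q_{j+1}`, `j < n`, each of mass `4⁻ʲ` and at distance
`≳ sⱼ` from `Qₙ(x)`. Hence `T_{n+1} - Tₙ = O(aₙ)` on `Q_{n+1}(x)` (one new shell), and the
oscillation of `Tₙ` on `Qₙ(x)` is `O(∑_{j<n} sₙ 4⁻ʲ / sⱼ²) = O(∑_{j<n} λ^{n-j} aⱼ)`. The increment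
`|S_{n+1}(x) - Sₙ(x)|` is bounded by the sum of the two, a summable sequence (the second term is
the convolution of `(aⱼ)` with a geometric sequence), so `(Sₙ(x))` is Cauchy.
-/

section Shells

variable {α E : Type*} {K : Set α} {Q : ℕ → Set α}

lemma diff_succ_eq_diff_union_shell (hQ : Antitone Q) (n : ℕ) :
    K \ Q (n + 1) = (K \ Q n) ∪ ((K ∩ Q n) \ Q (n + 1)) := by
  ext y
  have hsub : y ∈ Q (n + 1) → y ∈ Q n := fun hy => hQ n.le_succ hy
  simp only [Set.mem_sdiff, mem_union, mem_inter_iff]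
  tauto

lemma disjoint_diff_shell (n : ℕ) : Disjoint (K \ Q n) ((K ∩ Q n) \ Q (n + 1)) :=
  disjoint_left.mpr fun _ hy hy' => hy.2 hy'.1.2

variable [MeasurableSpace α] [NormedAddCommGroup E] [NormedSpace ℝ E] {μ : Measure α} {f : α → E}

lemma integrableOn_shell_and_norm_setIntegral_le (hK : MeasurableSet K)
    (hQm : ∀ j, MeasurableSet (Q j)) {n : ℕ} (hμ : μ (Q n) ≠ ∞) (hf : AEStronglyMeasurable f μ)
    {M : ℝ} (hM : 0 ≤ M) (hfM : ∀ y ∈ (K ∩ Q n) \ Q (n + 1), ‖f y‖ ≤ M) :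
    IntegrableOn f ((K ∩ Q n) \ Q (n + 1)) μ ∧
      ‖∫ y in (K ∩ Q n) \ Q (n + 1), f y ∂μ‖ ≤ M * μ.real (Q n) := by
  have hsub : (K ∩ Q n) \ Q (n + 1) ⊆ Q n := fun y hy => hy.1.2
  have hfin : μ ((K ∩ Q n) \ Q (n + 1)) < ∞ := (measure_mono hsub).trans_lt hμ.lt_top
  refine ⟨Measure.integrableOn_of_bounded hfin.ne hf
    ((ae_restrict_iff' ((hK.inter (hQm n)).diff (hQm (n + 1)))).mpr (ae_of_all _ hfM)), ?_⟩
  exact (norm_setIntegral_le_of_norm_le_const hfin hfM).trans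
    (mul_le_mul_of_nonneg_left (measureReal_mono hsub hμ) hM)

lemma integrableOn_diff_and_norm_setIntegral_le (hQ : Antitone Q) (hKQ : K ⊆ Q 0)
    (hK : MeasurableSet K) (hQm : ∀ j, MeasurableSet (Q j)) (hμ : ∀ j, μ (Q j) ≠ ∞)
    (hf : AEStronglyMeasurable f μ) {M : ℕ → ℝ} (hM : ∀ j, 0 ≤ M j) (n : ℕ)
    (hfM : ∀ j < n, ∀ y ∈ (K ∩ Q j) \ Q (j + 1), ‖f y‖ ≤ M j) :
    IntegrableOn f (K \ Q n) μ ∧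
      ‖∫ y in K \ Q n, f y ∂μ‖ ≤ ∑ j ∈ Finset.range n, M j * μ.real (Q j) := by
  induction n with
  | zero => simp [sdiff_eq_empty.mpr hKQ]
  | succ n ih =>
    obtain ⟨hint, hnorm⟩ := ih fun j hj => hfM j (Nat.lt_succ_of_lt hj)
    obtain ⟨hint', hnorm'⟩ :=
      integrableOn_shell_and_norm_setIntegral_le hK hQm (hμ n) hf (hM n) (hfM n n.lt_succ_self)
    rw [diff_succ_eq_diff_union_shell hQ, Finset.sum_range_succ,
      setIntegral_union (disjoint_diff_shell n) ((hK.inter (hQm n)).diff (hQm (n + 1))) hint hint']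
    exact ⟨hint.union hint', (norm_add_le _ _).trans (add_le_add hnorm hnorm')⟩

end Shells

section Averages

variable {α E : Type*} [MeasurableSpace α] [NormedAddCommGroup E] [NormedSpace ℝ E]
  [CompleteSpace E] {μ : Measure α} {s t : Set α} {f g : α → E} {a b : ℝ}

/-- `⨍ₛ f` lies within `b` of every value of `f` on `s`, and `⨍ₜ g` within `a` of `f` on `t`. -/
lemma dist_setAverage_le_of_subset (hts : t ⊆ s) (hs : MeasurableSet s) (ht : MeasurableSet t)
    (ht0 : μ t ≠ 0) (hsμ : μ s ≠ ∞) (hf : IntegrableOn f s μ) (hg : IntegrableOn g t μ)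
    (hgf : ∀ x ∈ t, dist (g x) (f x) ≤ a) (hosc : ∀ x ∈ s, ∀ y ∈ s, dist (f x) (f y) ≤ b) :
    dist (⨍ x in t, g x ∂μ) (⨍ x in s, f x ∂μ) ≤ a + b := by
  have hs0 : μ s ≠ 0 := fun h => ht0 (measure_mono_null hts h)
  have htμ : μ t ≠ ∞ := ne_top_of_le_ne_top hsμ (measure_mono hts)
  have hclose : ∀ x ∈ s, dist (f x) (⨍ y in s, f y ∂μ) ≤ b := fun x hx =>
    Metric.mem_closedBall'.mp <|
      (convex_closedBall (f x) b).set_average_mem Metric.isClosed_closedBall hs0 hsμ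
        ((ae_restrict_iff' hs).mpr (ae_of_all _ fun y hy =>
          Metric.mem_closedBall'.mpr (hosc x hx y hy))) hf
  refine (convex_closedBall _ (a + b)).set_average_mem Metric.isClosed_closedBall ht0 htμ
    ((ae_restrict_iff' ht).mpr (ae_of_all _ fun x hx => ?_)) hg
  exact (dist_triangle _ _ _).trans (add_le_add (hgf x hx) (hclose x (hts hx)))

end Averages

lemma summable_sum_range_pow_mul {r : ℝ} (hr0 : 0 ≤ r) (hr1 : r < 1) {a : ℕ → ℝ}
    (ha0 : 0 ≤ a) (ha : Summable a) :
    Summable fun n => ∑ j ∈ Finset.range n, r ^ (n - j) * a j := by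
  have hconv : Summable fun n => ∑ j ∈ Finset.range (n + 1), a j * r ^ (n - j) :=
    summable_sum_mul_range_of_summable_mul
      (ha.mul_of_nonneg (summable_geometric_of_lt_one hr0 hr1) ha0 fun _ => pow_nonneg hr0 _)
  refine hconv.of_nonneg_of_le (fun n => Finset.sum_nonneg fun j _ => ?_) fun n => ?_
  · exact mul_nonneg (pow_nonneg hr0 _) (ha0 j)
  · rw [Finset.sum_range_succ]
    simp only [mul_comm (a _)]
    exact le_add_of_nonneg_right (mul_nonneg (pow_nonneg hr0 _) (ha0 n))

section Geometry

variable {Λ : ℕ → ℝ} {lam : ℝ}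

lemma sideLen_succ (Λ : ℕ → ℝ) (n : ℕ) : sideLen Λ (n + 1) = sideLen Λ n * Λ n :=
  Finset.prod_range_succ _ _

lemma sideLen_pos (hpos : ∀ n, 0 < Λ n) (n : ℕ) : 0 < sideLen Λ n :=
  Finset.prod_pos fun k _ => hpos k

lemma sideLen_le_pow_mul (hpos : ∀ n, 0 < Λ n) (hle : ∀ n, Λ n ≤ lam) {m n : ℕ} (hmn : m ≤ n) :
    sideLen Λ n ≤ lam ^ (n - m) * sideLen Λ m := by
  induction n, hmn using Nat.le_induction with
  | base => simp
  | succ n hmn ih =>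
    rw [sideLen_succ, Nat.sub_add_comm hmn, pow_succ]
    calc sideLen Λ n * Λ n ≤ lam ^ (n - m) * sideLen Λ m * lam :=
          mul_le_mul ih (hle n) (hpos n).le ((sideLen_pos hpos n).le.trans ih)
      _ = _ := by ring

lemma mul_sideLen_le_sub (hpos : ∀ n, 0 < Λ n) (hle : ∀ n, Λ n ≤ lam) (n : ℕ) :
    (1 - 2 * lam) * sideLen Λ n ≤ sideLen Λ n - 2 * sideLen Λ (n + 1) := by
  rw [sideLen_succ]
  nlinarith [sideLen_pos hpos n, hle n]

lemma cornerPt_succ (w : ℕ → Bool × Bool) (n : ℕ) :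
    cornerPt Λ w (n + 1) = cornerPt Λ w n +
      (((if (w n).1 then sideLen Λ n - sideLen Λ (n + 1) else 0 : ℝ) : ℂ) +
        ((if (w n).2 then sideLen Λ n - sideLen Λ (n + 1) else 0 : ℝ) : ℂ) * Complex.I) :=
  Finset.sum_range_succ _ _

lemma cornerPt_re_succ (w : ℕ → Bool × Bool) (n : ℕ) :
    (cornerPt Λ w (n + 1)).re =
      (cornerPt Λ w n).re + if (w n).1 then sideLen Λ n - sideLen Λ (n + 1) else 0 := by
  simp [cornerPt_succ]

lemma cornerPt_im_succ (w : ℕ → Bool × Bool) (n : ℕ) :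
    (cornerPt Λ w (n + 1)).im =
      (cornerPt Λ w n).im + if (w n).2 then sideLen Λ n - sideLen Λ (n + 1) else 0 := by
  simp [cornerPt_succ]

lemma cSquare_succ_subset (hpos : ∀ n, 0 < Λ n) (hle1 : ∀ n, Λ n ≤ 1) (w : ℕ → Bool × Bool)
    (n : ℕ) : cSquare Λ w (n + 1) ⊆ cSquare Λ w n := by
  rintro z ⟨h1, h2, h3, h4⟩
  rw [cornerPt_re_succ] at h1 h2
  rw [cornerPt_im_succ] at h3 h4
  have hs : sideLen Λ (n + 1) ≤ sideLen Λ n := by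
    rw [sideLen_succ]; nlinarith [sideLen_pos hpos n, hle1 n]
  have hs' := sideLen_pos hpos (n + 1)
  refine ⟨?_, ?_, ?_, ?_⟩ <;> split_ifs at * <;> linarith

lemma cSquare_antitone (hpos : ∀ n, 0 < Λ n) (hle1 : ∀ n, Λ n ≤ 1) (w : ℕ → Bool × Bool) :
    Antitone (cSquare Λ w) :=
  antitone_nat_of_succ_le (cSquare_succ_subset hpos hle1 w)

lemma cantorK_subset_cSquare_zero (w : ℕ → Bool × Bool) : cantorK Λ ⊆ cSquare Λ w 0 := by
  intro z hz
  obtain ⟨w', hw'⟩ := mem_iUnion.mp (mem_iInter.mp hz 0)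
  simpa [cSquare, cornerPt] using hw'

lemma exists_mem_cSquare {x : ℂ} (hx : x ∈ cantorK Λ) (n : ℕ) : ∃ w, x ∈ cSquare Λ w n :=
  mem_iUnion.mp (mem_iInter.mp hx n)

lemma norm_sub_le_of_mem_cSquare {w : ℕ → Bool × Bool} {n : ℕ} {z z' : ℂ}
    (hz : z ∈ cSquare Λ w n) (hz' : z' ∈ cSquare Λ w n) : ‖z - z'‖ ≤ 2 * sideLen Λ n := by
  obtain ⟨a1, a2, a3, a4⟩ := hz
  obtain ⟨b1, b2, b3, b4⟩ := hz'
  calc ‖z - z'‖ ≤ |(z - z').re| + |(z - z').im| := Complex.norm_le_abs_re_add_abs_im _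
    _ ≤ sideLen Λ n + sideLen Λ n := by
        rw [Complex.sub_re, Complex.sub_im]
        gcongr <;> rw [abs_le] <;> constructor <;> linarith
    _ = 2 * sideLen Λ n := by ring

lemma sub_le_abs_sub_of_mem_Icc {b b' : Bool} (hb : b ≠ b') {c d s x x' : ℝ}
    (hx : x ∈ Icc (c + if b then d else 0) (c + (if b then d else 0) + s))
    (hx' : x' ∈ Icc (c + if b' then d else 0) (c + (if b' then d else 0) + s)) :
    d - s ≤ |x - x'| := by
  obtain ⟨hx1, hx2⟩ := hx
  obtain ⟨hx1', hx2'⟩ := hx'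
  cases b <;> cases b' <;> simp only [Bool.false_eq_true, if_true, if_false] at * <;>
    first
    | exact absurd rfl hb
    | exact le_abs.mpr (Or.inl (by linarith))
    | exact le_abs.mpr (Or.inr (by linarith))

lemma sub_le_norm_sub_of_mem_cSquare_succ {u v : ℕ → Bool × Bool} {n : ℕ} {z y : ℂ}
    (hc : cornerPt Λ u n = cornerPt Λ v n) (huv : u n ≠ v n)
    (hz : z ∈ cSquare Λ u (n + 1)) (hy : y ∈ cSquare Λ v (n + 1)) :
    sideLen Λ n - 2 * sideLen Λ (n + 1) ≤ ‖z - y‖ := by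
  obtain ⟨hz1, hz2, hz3, hz4⟩ := hz
  obtain ⟨hy1, hy2, hy3, hy4⟩ := hy
  rw [cornerPt_re_succ] at hz1 hz2 hy1 hy2
  rw [cornerPt_im_succ] at hz3 hz4 hy3 hy4
  rw [← hc] at hy1 hy2 hy3 hy4
  have hd : sideLen Λ n - 2 * sideLen Λ (n + 1)
      = (sideLen Λ n - sideLen Λ (n + 1)) - sideLen Λ (n + 1) := by ring
  rw [hd]
  rcases not_and_or.mp (Prod.ext_iff.not.mp huv) with hb | hb
  · calc _ ≤ |z.re - y.re| := sub_le_abs_sub_of_mem_Icc hb ⟨hz1, hz2⟩ ⟨hy1, hy2⟩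
      _ ≤ ‖z - y‖ := by simpa using Complex.abs_re_le_norm (z - y)
  · calc _ ≤ |z.im - y.im| := sub_le_abs_sub_of_mem_Icc hb ⟨hz3, hz4⟩ ⟨hy3, hy4⟩
      _ ≤ ‖z - y‖ := by simpa using Complex.abs_im_le_norm (z - y)

lemma cornerPt_eq_of_mem (hpos : ∀ n, 0 < Λ n) (hhalf : ∀ n, Λ n < 1 / 2)
    {u v : ℕ → Bool × Bool} {n : ℕ} {z : ℂ} (hu : z ∈ cSquare Λ u n) (hv : z ∈ cSquare Λ v n) :
    cornerPt Λ u n = cornerPt Λ v n := by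
  have hle1 : ∀ n, Λ n ≤ 1 := fun n => by linarith [hhalf n]
  induction n with
  | zero => simp [cornerPt]
  | succ n ih =>
    have hc := ih (cSquare_succ_subset hpos hle1 u n hu) (cSquare_succ_subset hpos hle1 v n hv)
    by_cases huv : u n = v n
    · rw [cornerPt_succ, cornerPt_succ, hc, huv]
    · have hsep := sub_le_norm_sub_of_mem_cSquare_succ hc huv hu hv
      rw [sub_self, norm_zero, sideLen_succ] at hsep
      nlinarith [sideLen_pos hpos n, hhalf n]

lemma Qn_eq_cSquare (hpos : ∀ n, 0 < Λ n) (hhalf : ∀ n, Λ n < 1 / 2)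
    {w : ℕ → Bool × Bool} {n : ℕ} {z : ℂ} (hz : z ∈ cSquare Λ w n) : Qn Λ n z = cSquare Λ w n := by
  have h : ∃ w, z ∈ cSquare Λ w n := ⟨w, hz⟩
  rw [Qn, dif_pos h, cSquare, cSquare, cornerPt_eq_of_mem hpos hhalf h.choose_spec hz]

lemma le_norm_sub_of_mem_shell (hpos : ∀ n, 0 < Λ n) (hle : ∀ n, Λ n ≤ lam) (hlam : lam < 1 / 2)
    {u : ℕ → Bool × Bool} {j : ℕ} {z y : ℂ} (hz : z ∈ cSquare Λ u (j + 1))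
    (hy : y ∈ (cantorK Λ ∩ cSquare Λ u j) \ cSquare Λ u (j + 1)) :
    (1 - 2 * lam) * sideLen Λ j ≤ ‖z - y‖ := by
  obtain ⟨⟨hyK, hyu⟩, hyu'⟩ := hy
  have hhalf : ∀ n, Λ n < 1 / 2 := fun n => (hle n).trans_lt hlam
  have hle1 : ∀ n, Λ n ≤ 1 := fun n => by linarith [hhalf n]
  obtain ⟨v, hyv⟩ := exists_mem_cSquare hyK (j + 1)
  have hc := cornerPt_eq_of_mem hpos hhalf hyu (cSquare_succ_subset hpos hle1 v j hyv)
  have huv : u j ≠ v j := by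
    intro huv
    refine hyu' ?_
    rwa [cSquare, cornerPt_succ, hc, huv, ← cornerPt_succ]
  exact (mul_sideLen_le_sub hpos hle j).trans (sub_le_norm_sub_of_mem_cSquare_succ hc huv hz hyv)

lemma measurableSet_cSquare (w : ℕ → Bool × Bool) (n : ℕ) : MeasurableSet (cSquare Λ w n) :=
  (measurableSet_le measurable_const Complex.measurable_re).inter <|
    (measurableSet_le Complex.measurable_re measurable_const).inter <|
      (measurableSet_le measurable_const Complex.measurable_im).inter
        (measurableSet_le Complex.measurable_im measurable_const)

lemma cSquare_congr {w w' : ℕ → Bool × Bool} {n : ℕ} (h : ∀ k < n, w k = w' k) :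
    cSquare Λ w n = cSquare Λ w' n := by
  have hc : cornerPt Λ w n = cornerPt Λ w' n :=
    Finset.sum_congr rfl fun k hk => by rw [h k (Finset.mem_range.mp hk)]
  rw [cSquare, cSquare, hc]

/-- Only the first `n` letters of a word matter, so `⋃ w, cSquare Λ w n` is a finite union. -/
lemma measurableSet_cantorK : MeasurableSet (cantorK Λ) := by
  refine MeasurableSet.iInter fun n => ?_
  obtain ⟨pad, hpad⟩ : ∃ pad : (Fin n → Bool × Bool) → ℕ → Bool × Bool,
      ∀ v k (hk : k < n), pad v k = v ⟨k, hk⟩ :=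
    ⟨fun v k => if hk : k < n then v ⟨k, hk⟩ else default, fun v k hk => dif_pos hk⟩
  have h : ⋃ w, cSquare Λ w n = ⋃ v, cSquare Λ (pad v) n := by
    refine Subset.antisymm (iUnion_subset fun w => ?_)
      (iUnion_subset fun v => subset_iUnion (fun w => cSquare Λ w n) (pad v))
    rw [cSquare_congr (w' := pad fun k => w k) fun k hk => (hpad (fun k => w k) k hk).symm]
    exact subset_iUnion (fun v => cSquare Λ (pad v) n) _
  rw [h]
  exact MeasurableSet.iUnion fun v => measurableSet_cSquare _ n

end Geometry

section CantorMartingale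

variable {Λ : ℕ → ℝ} {lam : ℝ} {μ : Measure ℂ}

lemma linDensity_eq (Λ : ℕ → ℝ) (n : ℕ) : linDensity Λ n = (sideLen Λ n)⁻¹ * (4 : ℝ)⁻¹ ^ n := by
  rw [linDensity, one_div, mul_inv, inv_pow, mul_comm]

lemma linDensity_nonneg (hpos : ∀ n, 0 < Λ n) : 0 ≤ linDensity Λ := fun n => by
  have := sideLen_pos hpos n
  rw [Pi.zero_apply, linDensity]
  positivity

lemma norm_inv_sub_le_of_mem_shell (hpos : ∀ n, 0 < Λ n) (hle : ∀ n, Λ n ≤ lam)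
    (hlam : lam < 1 / 2) {u : ℕ → Bool × Bool} {j : ℕ} {z y : ℂ} (hz : z ∈ cSquare Λ u (j + 1))
    (hy : y ∈ (cantorK Λ ∩ cSquare Λ u j) \ cSquare Λ u (j + 1)) :
    ‖(z - y)⁻¹‖ ≤ (1 - 2 * lam)⁻¹ * (sideLen Λ j)⁻¹ := by
  have hgap : 0 < (1 - 2 * lam) * sideLen Λ j := mul_pos (by linarith) (sideLen_pos hpos j)
  rw [norm_inv, ← mul_inv]
  exact inv_anti₀ hgap (le_norm_sub_of_mem_shell hpos hle hlam hz hy)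

/-- Both `z, z'` lie in `Q_{j+1}` and `y` is `(1 - 2λ) sⱼ`-far from it, while `|z - z'| ≤ 2 sₙ`. -/
lemma norm_inv_sub_sub_inv_sub_le (hpos : ∀ n, 0 < Λ n) (hle : ∀ n, Λ n ≤ lam)
    (hlam : lam < 1 / 2) {u : ℕ → Bool × Bool} {n j : ℕ} (hj : j < n) {z z' y : ℂ}
    (hz : z ∈ cSquare Λ u n) (hz' : z' ∈ cSquare Λ u n)
    (hy : y ∈ (cantorK Λ ∩ cSquare Λ u j) \ cSquare Λ u (j + 1)) :
    ‖(z - y)⁻¹ - (z' - y)⁻¹‖ ≤ 2 * (1 - 2 * lam)⁻¹ ^ 2 * lam ^ (n - j) * (sideLen Λ j)⁻¹ := by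
  have hle1 : ∀ n, Λ n ≤ 1 := fun n => by linarith [hle n]
  have hsub := cSquare_antitone hpos hle1 u (Nat.succ_le_of_lt hj)
  have h1 := norm_inv_sub_le_of_mem_shell hpos hle hlam (hsub hz) hy
  have h2 := norm_inv_sub_le_of_mem_shell hpos hle hlam (hsub hz') hy
  have hne : ∀ {w}, w ∈ cSquare Λ u n → w - y ≠ 0 := fun hw h => hy.2 (sub_eq_zero.mp h ▸ hsub hw)
  have hdiam : ‖z' - z‖ ≤ 2 * (lam ^ (n - j) * sideLen Λ j) :=
    (norm_sub_le_of_mem_cSquare hz' hz).trans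
      (mul_le_mul_of_nonneg_left (sideLen_le_pow_mul hpos hle hj.le) zero_le_two)
  have hC : 0 ≤ (1 - 2 * lam)⁻¹ * (sideLen Λ j)⁻¹ :=
    mul_nonneg (inv_nonneg.mpr (by linarith)) (inv_nonneg.mpr (sideLen_pos hpos j).le)
  rw [inv_sub_inv (hne hz) (hne hz'), sub_sub_sub_cancel_right, div_eq_mul_inv, mul_inv, norm_mul,
    norm_mul]
  calc ‖z' - z‖ * (‖(z - y)⁻¹‖ * ‖(z' - y)⁻¹‖)
      ≤ 2 * (lam ^ (n - j) * sideLen Λ j) *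
          ((1 - 2 * lam)⁻¹ * (sideLen Λ j)⁻¹ * ((1 - 2 * lam)⁻¹ * (sideLen Λ j)⁻¹)) :=
        mul_le_mul hdiam (mul_le_mul h1 h2 (norm_nonneg _) hC) (by positivity)
          ((norm_nonneg _).trans hdiam)
    _ = 2 * (1 - 2 * lam)⁻¹ ^ 2 * lam ^ (n - j) * (sideLen Λ j)⁻¹ := by
        field_simp

lemma measureReal_cSquare (hμQ : ∀ w n, μ (cSquare Λ w n) = (4 : ℝ≥0∞)⁻¹ ^ n)
    (w : ℕ → Bool × Bool) (n : ℕ) : μ.real (cSquare Λ w n) = (4 : ℝ)⁻¹ ^ n := by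
  simp [measureReal_def, hμQ]

lemma measure_cSquare_ne_top (hμQ : ∀ w n, μ (cSquare Λ w n) = (4 : ℝ≥0∞)⁻¹ ^ n)
    (w : ℕ → Bool × Bool) (n : ℕ) : μ (cSquare Λ w n) ≠ ∞ := by
  simp [hμQ]

lemma Tn_eq_setIntegral (hpos : ∀ n, 0 < Λ n) (hhalf : ∀ n, Λ n < 1 / 2)
    {u : ℕ → Bool × Bool} {n : ℕ} {z : ℂ} (hz : z ∈ cSquare Λ u n) :
    Tn Λ μ n z = ∫ y in cantorK Λ \ cSquare Λ u n, (z - y)⁻¹ ∂μ := by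
  rw [Tn, Qn_eq_cSquare hpos hhalf hz]

lemma integrableOn_cantorK_diff_and_norm_setIntegral_le (hpos : ∀ n, 0 < Λ n)
    (hle1 : ∀ n, Λ n ≤ 1) (hμQ : ∀ w n, μ (cSquare Λ w n) = (4 : ℝ≥0∞)⁻¹ ^ n)
    (u : ℕ → Bool × Bool) {f : ℂ → ℂ} (hf : Measurable f) {M : ℕ → ℝ} (hM : ∀ j, 0 ≤ M j)
    (n : ℕ) (hfM : ∀ j < n, ∀ y ∈ (cantorK Λ ∩ cSquare Λ u j) \ cSquare Λ u (j + 1), ‖f y‖ ≤ M j) :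
    IntegrableOn f (cantorK Λ \ cSquare Λ u n) μ ∧
      ‖∫ y in cantorK Λ \ cSquare Λ u n, f y ∂μ‖ ≤ ∑ j ∈ Finset.range n, M j * (4 : ℝ)⁻¹ ^ j := by
  simpa only [measureReal_cSquare hμQ] using
    integrableOn_diff_and_norm_setIntegral_le (cSquare_antitone hpos hle1 u)
      (cantorK_subset_cSquare_zero u) measurableSet_cantorK (measurableSet_cSquare u)
      (measure_cSquare_ne_top hμQ u) hf.aestronglyMeasurable hM n hfM

lemma integrableOn_inv_sub_and_norm_setIntegral_le (hpos : ∀ n, 0 < Λ n)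
    (hle : ∀ n, Λ n ≤ lam) (hlam : lam < 1 / 2)
    (hμQ : ∀ w n, μ (cSquare Λ w n) = (4 : ℝ≥0∞)⁻¹ ^ n) {u : ℕ → Bool × Bool} {n : ℕ} {z : ℂ}
    (hz : z ∈ cSquare Λ u n) :
    IntegrableOn (fun y => (z - y)⁻¹) (cantorK Λ \ cSquare Λ u n) μ ∧
      ‖∫ y in cantorK Λ \ cSquare Λ u n, (z - y)⁻¹ ∂μ‖ ≤
        (1 - 2 * lam)⁻¹ * ∑ j ∈ Finset.range n, linDensity Λ j := by
  have hle1 : ∀ n, Λ n ≤ 1 := fun n => by linarith [hle n]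
  have hc : 0 ≤ (1 - 2 * lam)⁻¹ := inv_nonneg.mpr (by linarith)
  simp only [Finset.mul_sum, linDensity_eq, ← mul_assoc]
  exact integrableOn_cantorK_diff_and_norm_setIntegral_le hpos hle1 hμQ u (by fun_prop)
    (fun j => mul_nonneg hc (inv_nonneg.mpr (sideLen_pos hpos j).le)) n fun j hj y hy =>
      norm_inv_sub_le_of_mem_shell hpos hle hlam (cSquare_antitone hpos hle1 u hj hz) hy

lemma integrableOn_Tn (hpos : ∀ n, 0 < Λ n) (hle : ∀ n, Λ n ≤ lam) (hlam : lam < 1 / 2)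
    (hμQ : ∀ w n, μ (cSquare Λ w n) = (4 : ℝ≥0∞)⁻¹ ^ n) (u : ℕ → Bool × Bool) (n : ℕ) :
    IntegrableOn (Tn Λ μ n) (cSquare Λ u n) μ := by
  have hS : μ (cantorK Λ \ cSquare Λ u n) ≠ ∞ :=
    ne_top_of_le_ne_top (measure_cSquare_ne_top hμQ u 0)
      (measure_mono (sdiff_subset.trans (cantorK_subset_cSquare_zero u)))
  have := isFiniteMeasure_restrict.mpr hS
  have hF : StronglyMeasurable fun z => ∫ y in cantorK Λ \ cSquare Λ u n, (z - y)⁻¹ ∂μ :=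
    (by fun_prop : Measurable fun p : ℂ × ℂ => (p.1 - p.2)⁻¹).stronglyMeasurable
      |>.integral_prod_right'
  refine (Measure.integrableOn_of_bounded (measure_cSquare_ne_top hμQ u n) hF.aestronglyMeasurable
    ((ae_restrict_iff' (measurableSet_cSquare u n)).mpr (ae_of_all _ fun z hz =>
      (integrableOn_inv_sub_and_norm_setIntegral_le hpos hle hlam hμQ hz).2))).congr_fun
    (fun z hz => ?_) (measurableSet_cSquare u n)
  exact (Tn_eq_setIntegral hpos (fun n => (hle n).trans_lt hlam) hz).symm

/-- `K \ Q_{n+1}` is `K \ Qₙ` plus the shell `(K ∩ Qₙ) \ Q_{n+1}`, of mass `≤ 4⁻ⁿ`. -/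
lemma norm_Tn_succ_sub_Tn_le (hpos : ∀ n, 0 < Λ n) (hle : ∀ n, Λ n ≤ lam) (hlam : lam < 1 / 2)
    (hμQ : ∀ w n, μ (cSquare Λ w n) = (4 : ℝ≥0∞)⁻¹ ^ n) {u : ℕ → Bool × Bool} {n : ℕ} {z : ℂ}
    (hz : z ∈ cSquare Λ u (n + 1)) :
    ‖Tn Λ μ (n + 1) z - Tn Λ μ n z‖ ≤ (1 - 2 * lam)⁻¹ * linDensity Λ n := by
  have hhalf : ∀ n, Λ n < 1 / 2 := fun n => (hle n).trans_lt hlam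
  have hle1 : ∀ n, Λ n ≤ 1 := fun n => by linarith [hle n]
  have hzn := cSquare_succ_subset hpos hle1 u n hz
  obtain ⟨hint, -⟩ := integrableOn_inv_sub_and_norm_setIntegral_le hpos hle hlam hμQ hzn
  have hmeas : Measurable fun y => (z - y)⁻¹ := by fun_prop
  obtain ⟨hint', hnorm'⟩ := integrableOn_shell_and_norm_setIntegral_le measurableSet_cantorK
    (measurableSet_cSquare u) (measure_cSquare_ne_top hμQ u n) hmeas.aestronglyMeasurable
    (mul_nonneg (inv_nonneg.mpr (by linarith)) (inv_nonneg.mpr (sideLen_pos hpos n).le))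
    fun y hy => norm_inv_sub_le_of_mem_shell hpos hle hlam hz hy
  rw [Tn_eq_setIntegral hpos hhalf hz, Tn_eq_setIntegral hpos hhalf hzn,
    diff_succ_eq_diff_union_shell (cSquare_antitone hpos hle1 u),
    setIntegral_union (disjoint_diff_shell n)
      ((measurableSet_cantorK.inter (measurableSet_cSquare u n)).diff (measurableSet_cSquare u _))
      hint hint', add_sub_cancel_left]
  rwa [measureReal_cSquare hμQ, mul_assoc, ← linDensity_eq] at hnorm'

lemma dist_Tn_le (hpos : ∀ n, 0 < Λ n) (hle : ∀ n, Λ n ≤ lam) (hlam : lam < 1 / 2)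
    (hμQ : ∀ w n, μ (cSquare Λ w n) = (4 : ℝ≥0∞)⁻¹ ^ n) {u : ℕ → Bool × Bool} {n : ℕ} {z z' : ℂ}
    (hz : z ∈ cSquare Λ u n) (hz' : z' ∈ cSquare Λ u n) :
    dist (Tn Λ μ n z) (Tn Λ μ n z') ≤
      2 * (1 - 2 * lam)⁻¹ ^ 2 * ∑ j ∈ Finset.range n, lam ^ (n - j) * linDensity Λ j := by
  have hhalf : ∀ n, Λ n < 1 / 2 := fun n => (hle n).trans_lt hlam
  have hle1 : ∀ n, Λ n ≤ 1 := fun n => by linarith [hle n]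
  have hlam0 : 0 ≤ lam := ((hpos 0).trans_le (hle 0)).le
  rw [dist_eq_norm, Tn_eq_setIntegral hpos hhalf hz, Tn_eq_setIntegral hpos hhalf hz',
    ← integral_sub (integrableOn_inv_sub_and_norm_setIntegral_le hpos hle hlam hμQ hz).1
      (integrableOn_inv_sub_and_norm_setIntegral_le hpos hle hlam hμQ hz').1]
  simp only [Finset.mul_sum, linDensity_eq, ← mul_assoc]
  exact (integrableOn_cantorK_diff_and_norm_setIntegral_le hpos hle1 hμQ u (by fun_prop)
    (fun j => by have := sideLen_pos hpos j; positivity) n fun j hj y hy =>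
      norm_inv_sub_sub_inv_sub_le hpos hle hlam hj hz hz' hy).2

/-- The first term bounds `‖T_{n+1} - Tₙ‖` on `Q_{n+1}(x)`, the second the oscillation of `Tₙ`
on `Qₙ(x)`. -/
lemma dist_Sn_succ_le (hpos : ∀ n, 0 < Λ n) (hle : ∀ n, Λ n ≤ lam) (hlam : lam < 1 / 2)
    (hμQ : ∀ w n, μ (cSquare Λ w n) = (4 : ℝ≥0∞)⁻¹ ^ n) {x : ℂ} (hx : x ∈ cantorK Λ) (n : ℕ) :
    dist (Sn Λ μ n x) (Sn Λ μ (n + 1) x) ≤ (1 - 2 * lam)⁻¹ * linDensity Λ n +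
      2 * (1 - 2 * lam)⁻¹ ^ 2 * ∑ j ∈ Finset.range n, lam ^ (n - j) * linDensity Λ j := by
  have hhalf : ∀ n, Λ n < 1 / 2 := fun n => (hle n).trans_lt hlam
  have hle1 : ∀ n, Λ n ≤ 1 := fun n => by linarith [hle n]
  obtain ⟨u, hu⟩ := exists_mem_cSquare hx (n + 1)
  have hsub := cSquare_succ_subset hpos hle1 u n
  rw [Sn, Sn, Qn_eq_cSquare hpos hhalf (hsub hu), Qn_eq_cSquare hpos hhalf hu, dist_comm]
  exact dist_setAverage_le_of_subset hsub (measurableSet_cSquare u n)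
    (measurableSet_cSquare u (n + 1)) (by simp [hμQ]) (measure_cSquare_ne_top hμQ u n)
    (integrableOn_Tn hpos hle hlam hμQ u n) (integrableOn_Tn hpos hle hlam hμQ u (n + 1))
    (fun z hz => (dist_eq_norm _ _).trans_le (norm_Tn_succ_sub_Tn_le hpos hle hlam hμQ hz))
    fun z hz z' hz' => dist_Tn_le hpos hle hlam hμQ hz hz'

end CantorMartingale

theorem martingale_converges_of_summable_general (Λ : ℕ → ℝ) (lam : ℝ) (hlam : lam < 1 / 2)
    (hΛ : ∀ n, 1 / 4 ≤ Λ n ∧ Λ n ≤ lam)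
    (μ : Measure ℂ)
    (hμQ : ∀ (w : ℕ → Bool × Bool) (n : ℕ), μ (cSquare Λ w n) = (4 : ℝ≥0∞)⁻¹ ^ n)
    (hsum : Summable (linDensity Λ)) :
    ∀ x ∈ cantorK Λ, ∃ L : ℂ, Tendsto (fun n => Sn Λ μ n x) atTop (𝓝 L) := by
  intro x hx
  have hpos : ∀ n, 0 < Λ n := fun n => by linarith [(hΛ n).1]
  have hle : ∀ n, Λ n ≤ lam := fun n => (hΛ n).2
  have hlam0 : 0 ≤ lam := ((hpos 0).trans_le (hle 0)).le
  have hbound : Summable fun n => (1 - 2 * lam)⁻¹ * linDensity Λ n +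
      2 * (1 - 2 * lam)⁻¹ ^ 2 * ∑ j ∈ Finset.range n, lam ^ (n - j) * linDensity Λ j :=
    (hsum.mul_left _).add ((summable_sum_range_pow_mul hlam0 (by linarith)
      (linDensity_nonneg hpos) hsum).mul_left _)
  exact cauchySeq_tendsto_of_complete
    (cauchySeq_of_dist_le_of_summable _ (dist_Sn_succ_le hpos hle hlam hμQ hx) hbound)

/-- If `∑ₙ aₙ < ∞`, then the martingale `(S_n(x))` converges for every `x ∈ K`. -/
theorem martingale_converges_of_summable (Λ : ℕ → ℝ) (lam : ℝ) (hlam : lam < 1 / 2)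
    (hΛ : ∀ n, 1 / 4 ≤ Λ n ∧ Λ n ≤ lam)
    (μ : Measure ℂ) [IsProbabilityMeasure μ]
    (hμK : μ (cantorK Λ) = 1)
    (hμQ : ∀ (w : ℕ → Bool × Bool) (n : ℕ), μ (cSquare Λ w n) = (4 : ℝ≥0∞)⁻¹ ^ n)
    (hsum : Summable (linDensity Λ)) :
    ∀ x ∈ cantorK Λ, ∃ L : ℂ, Tendsto (fun n => Sn Λ μ n x) atTop (𝓝 L) :=
  martingale_converges_of_summable_general Λ lam hlam hΛ μ hμQ hsum
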